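/- Fix a prime p, let ℚ_p denote the field of p-adic numbers with p-adic valuation v, let ℤ_p be the ring of p-adic integers, and let μ_n denote the normalized Haar probability measure on the compact group ℤ_p^n. Let n, m, s be natural numbers and let R ⊆ ℚ_p^n × ℚ_p^m × ℚ_p^s be a relation which is a finite Boolean combination of sets of the forms {z : f(z) = 0}, {z : v(f(z)) ≤ v(g(z))}, and {z : ∃ w ∈ ℚ_p, w^k = f(z)}, where f, g range over a finite family of polynomials over ℚ_p and k ≥ 2. Then there is a constant δ > 0 such that for every parameter c ∈ ℚ_p^s there exist measurable sets A ⊆ ℤ_p^n and B ⊆ ℤ_p^m with μ_n(A) ≥ δ and μ_m(B) ≥ δ such that the pair (A, B) is homogeneous for R_c = {(x,y) : (x,y,c) ∈ R}: either A × B ⊆ R_c or (A × B) ∩ R_c = ∅. -/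

import Mathlib

/-!
Membership of `(x, y, c)` in `R` depends only on the norms of finitely many values `f (x, y, c)`
and on whether they are `k`-th powers for `k ≤ K`. By the ultrametric inequality and Hensel's
lemma, a value `b ≠ 0` keeps its norm and its power classes under perturbations of size
`< ‖K!‖² ‖b‖`. Specialize the parameter `c` and normalize coefficients: compactness of the set of
normalized coefficient vectors yields `ε > 0`, independent of `c`, and an integral point `a` at
which every specialized polynomial takes a value at least `ε` times each of its coefficients.
On `ℤ_p^N` a polynomial moves by at most its largest coefficient times the distance, so `R_c` is
constant on a product of balls around `a` whose radius does not depend on `c`, and translation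
invariance gives these balls a fixed positive Haar measure.
-/

/-- Finite Boolean combinations of a family `S` of subsets of `α`. -/
inductive BoolComb {α : Type*} (S : Set (Set α)) : Set α → Prop
  | basic (s : Set α) (hs : s ∈ S) : BoolComb S s
  | compl (s : Set α) (h : BoolComb S s) : BoolComb S sᶜ
  | inter (s t : Set α) (hs : BoolComb S s) (ht : BoolComb S t) : BoolComb S (s ∩ t)
  | union (s t : Set α) (hs : BoolComb S s) (ht : BoolComb S t) : BoolComb S (s ∪ t)

open MeasureTheory

open MvPolynomial Metric
open scoped Nat

theorem BoolComb.exists_mem_iff_of_rel {α ι : Type*} [SemilatticeSup ι]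
    {S : Set (Set α)} (r : ι → α → α → Prop) (hr : ∀ ⦃i j⦄, i ≤ j → ∀ z z', r j z z' → r i z z')
    (hS : ∀ s ∈ S, ∃ i, ∀ z z', r i z z' → (z ∈ s ↔ z' ∈ s)) {t : Set α} (ht : BoolComb S t) :
    ∃ i, ∀ z z', r i z z' → (z ∈ t ↔ z' ∈ t) := by
  induction ht with
  | basic s hs => exact hS s hs
  | compl s _ ih =>
    obtain ⟨i, hi⟩ := ih
    exact ⟨i, fun z z' h => not_congr (hi z z' h)⟩
  | inter s t _ _ ihs iht =>
    obtain ⟨i, hi⟩ := ihs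
    obtain ⟨j, hj⟩ := iht
    exact ⟨i ⊔ j, fun z z' h =>
      and_congr (hi z z' (hr le_sup_left z z' h)) (hj z z' (hr le_sup_right z z' h))⟩
  | union s t _ _ ihs iht =>
    obtain ⟨i, hi⟩ := ihs
    obtain ⟨j, hj⟩ := iht
    exact ⟨i ⊔ j, fun z z' h =>
      or_congr (hi z z' (hr le_sup_left z z' h)) (hj z z' (hr le_sup_right z z' h))⟩

theorem IsCompact.exists_pos_forall_exists_le {X Y : Type*} [TopologicalSpace Y] {K : Set Y}
    (hK : IsCompact K) {g : X → Y → ℝ} (hg : ∀ a, Continuous (g a))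
    (hpos : ∀ c ∈ K, ∃ a, 0 < g a c) : ∃ ε > 0, ∀ c ∈ K, ∃ a, ε ≤ g a c := by
  refine hK.induction_on (p := fun S => ∃ ε > 0, ∀ c ∈ S, ∃ a, ε ≤ g a c)
    ⟨1, one_pos, by simp⟩ ?_ ?_ ?_
  · rintro S T hST ⟨ε, hε, hT⟩
    exact ⟨ε, hε, fun c hc => hT c (hST hc)⟩
  · rintro S T ⟨ε, hε, hS⟩ ⟨η, hη, hT⟩
    refine ⟨min ε η, lt_min hε hη, ?_⟩
    rintro c (hc | hc)
    · obtain ⟨a, ha⟩ := hS c hc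
      exact ⟨a, (min_le_left _ _).trans ha⟩
    · obtain ⟨a, ha⟩ := hT c hc
      exact ⟨a, (min_le_right _ _).trans ha⟩
  · intro c hc
    obtain ⟨a, ha⟩ := hpos c hc
    refine ⟨{c' | g a c / 2 < g a c'}, mem_nhdsWithin_of_mem_nhds ?_, g a c / 2, half_pos ha,
      fun c' hc' => ⟨a, hc'.le⟩⟩
    exact ((hg a).isOpen_preimage _ isOpen_Ioi).mem_nhds (half_lt_self ha)

theorem exists_pos_ofReal_le_measure_closedBall {E : Type*} [NormedAddCommGroup E]
    [MeasurableSpace E] [BorelSpace E] (μ : Measure E) [μ.IsAddHaarMeasure] {r : ℝ} (hr : 0 < r) :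
    ∃ δ > 0, ∀ a, ENNReal.ofReal δ ≤ μ (closedBall a r) := by
  obtain ⟨δ, -, hδ, hδμ⟩ := ENNReal.lt_iff_exists_real_btwn.mp (measure_closedBall_pos μ 0 hr)
  exact ⟨δ, ENNReal.ofReal_pos.mp hδ, fun a => by
    rw [Measure.addHaar_closedBall_center]; exact hδμ.le⟩

theorem norm_factorial_le_norm_natCast {R : Type*} [SeminormedRing R] [NormOneClass R]
    [IsUltrametricDist R] {k K : ℕ} (hk : 0 < k) (hkK : k ≤ K) :
    ‖(K ! : R)‖ ≤ ‖(k : R)‖ := by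
  obtain ⟨j, hj⟩ := Nat.dvd_factorial hk hkK
  rw [hj, Nat.cast_mul]
  exact (norm_mul_le _ _).trans
    (mul_le_of_le_one_right (norm_nonneg _) (IsUltrametricDist.norm_natCast_le_one R j))

section Ultrametric

variable {R : Type*} [NormedCommRing R] [NormOneClass R] [IsUltrametricDist R]

theorem norm_prod_sub_prod_le {ι : Type*} {s : Finset ι} {x y : ι → R} {δ : ℝ} (hδ : 0 ≤ δ)
    (hx : ∀ i ∈ s, ‖x i‖ ≤ 1) (hy : ∀ i ∈ s, ‖y i‖ ≤ 1) (hxy : ∀ i ∈ s, ‖x i - y i‖ ≤ δ) :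
    ‖∏ i ∈ s, x i - ∏ i ∈ s, y i‖ ≤ δ := by
  classical
  induction s using Finset.induction_on with
  | empty => simpa using hδ
  | insert j s hj ih =>
    simp only [Finset.mem_insert, forall_eq_or_imp] at hx hy hxy
    rw [Finset.prod_insert hj, Finset.prod_insert hj,
      show x j * ∏ i ∈ s, x i - y j * ∏ i ∈ s, y i
        = x j * (∏ i ∈ s, x i - ∏ i ∈ s, y i) + (x j - y j) * ∏ i ∈ s, y i by ring]
    have hys : ‖∏ i ∈ s, y i‖ ≤ 1 :=
      (Finset.norm_prod_le _ _).trans (Finset.prod_le_one (fun _ _ => norm_nonneg _) hy.2)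
    refine (IsUltrametricDist.norm_add_le_max _ _).trans (max_le ?_ ?_)
    · exact (norm_mul_le _ _).trans
        ((mul_le_of_le_one_left (norm_nonneg _) hx.1).trans (ih hx.2 hy.2 hxy.2))
    · exact (norm_mul_le _ _).trans ((mul_le_of_le_one_right (norm_nonneg _) hys).trans hxy.1)

theorem norm_pow_sub_pow_le {x y : R} {δ : ℝ} (hδ : 0 ≤ δ) (hx : ‖x‖ ≤ 1) (hy : ‖y‖ ≤ 1)
    (hxy : ‖x - y‖ ≤ δ) (k : ℕ) : ‖x ^ k - y ^ k‖ ≤ δ := by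
  simpa using norm_prod_sub_prod_le (s := Finset.range k) (x := fun _ => x) (y := fun _ => y) hδ
    (fun _ _ => hx) (fun _ _ => hy) (fun _ _ => hxy)

variable {σ : Type*} [Fintype σ]

theorem MvPolynomial.norm_eval_le_of_norm_coeff_le {f : MvPolynomial σ R} {G : ℝ}
    (hG : ∀ m, ‖coeff m f‖ ≤ G) {x : σ → R} (hx : ∀ i, ‖x i‖ ≤ 1) : ‖eval x f‖ ≤ G := by
  rw [eval_eq']
  refine IsUltrametricDist.norm_sum_le_of_forall_le_of_nonneg ((norm_nonneg _).trans (hG 0))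
    fun m _ => ?_
  refine (norm_mul_le _ _).trans ((mul_le_of_le_one_right (norm_nonneg _) ?_).trans (hG m))
  exact (Finset.norm_prod_le _ _).trans (Finset.prod_le_one (fun _ _ => norm_nonneg _)
    fun i _ => (norm_pow_le _ _).trans (pow_le_one₀ (norm_nonneg _) (hx i)))

theorem MvPolynomial.norm_eval_sub_eval_le {f : MvPolynomial σ R} {G δ : ℝ}
    (hG : ∀ m, ‖coeff m f‖ ≤ G) (hδ : 0 ≤ δ) {x y : σ → R} (hx : ∀ i, ‖x i‖ ≤ 1)
    (hy : ∀ i, ‖y i‖ ≤ 1) (hxy : ∀ i, ‖x i - y i‖ ≤ δ) : ‖eval x f - eval y f‖ ≤ G * δ := by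
  have hG₀ : 0 ≤ G := (norm_nonneg _).trans (hG 0)
  rw [eval_eq', eval_eq', ← Finset.sum_sub_distrib]
  refine IsUltrametricDist.norm_sum_le_of_forall_le_of_nonneg (by positivity) fun m _ => ?_
  rw [← mul_sub]
  refine (norm_mul_le _ _).trans (mul_le_mul (hG m) ?_ (norm_nonneg _) hG₀)
  exact norm_prod_sub_prod_le hδ
    (fun i _ => (norm_pow_le _ _).trans (pow_le_one₀ (norm_nonneg _) (hx i)))
    (fun i _ => (norm_pow_le _ _).trans (pow_le_one₀ (norm_nonneg _) (hy i)))
    fun i _ => norm_pow_sub_pow_le hδ (hx i) (hy i) (hxy i) _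

end Ultrametric

section Normalized

variable {𝕜 ι : Type*} [NormedField 𝕜]

def IsNormalized (u : ι → 𝕜) : Prop := (∀ i, ‖u i‖ ≤ 1) ∧ ∃ i, u i = 1

theorem exists_eq_smul_isNormalized [Finite ι] [Nonempty ι] (v : ι → 𝕜) :
    ∃ (t : 𝕜) (u : ι → 𝕜), IsNormalized u ∧ v = t • u := by
  obtain ⟨i₀, hi₀⟩ := Finite.exists_max fun i => ‖v i‖
  by_cases h : v i₀ = 0
  · refine ⟨0, fun _ => 1, ⟨fun _ => norm_one.le, i₀, rfl⟩, funext fun i => ?_⟩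
    simpa [h] using hi₀ i
  · refine ⟨v i₀, (v i₀)⁻¹ • v, ⟨fun i => ?_, i₀, inv_mul_cancel₀ h⟩, by rw [smul_smul,
      mul_inv_cancel₀ h, one_smul]⟩
    rw [Pi.smul_apply, norm_smul, norm_inv]
    exact inv_mul_le_one_of_le₀ (hi₀ i) (norm_nonneg _)

theorem isCompact_setOf_isNormalized [ProperSpace 𝕜] [Finite ι] :
    IsCompact {u : ι → 𝕜 | IsNormalized u} := by
  have hball : IsCompact (Set.univ.pi fun _ : ι => closedBall (0 : 𝕜) 1) :=
    isCompact_univ_pi fun _ => isCompact_closedBall 0 1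
  have hone : IsClosed (⋃ i, {u : ι → 𝕜 | u i = 1}) :=
    isClosed_iUnion_of_finite fun i => isClosed_eq (continuous_apply i) continuous_const
  convert hball.inter_right hone using 1
  ext u
  simp [IsNormalized]

end Normalized

namespace MvPolynomial

theorem exists_eval_natCast_ne_zero {R σ : Type*} [CommRing R] [IsDomain R] [CharZero R]
    [Finite σ] {f : MvPolynomial σ R} (hf : f ≠ 0) :
    ∃ x : σ → ℕ, eval (fun i => (x i : R)) f ≠ 0 := by
  classical
  by_contra! h
  refine hf (eq_zero_of_eval_zero_at_prod_finset f
    (fun i => (Finset.range (f.degreeOf i + 1)).image Nat.cast) (fun i => ?_) fun y hy => ?_)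
  · rw [Finset.card_image_of_injective _ Nat.cast_injective, Finset.card_range]
    exact Nat.lt_succ_self _
  · choose x _ hx using fun i => Finset.mem_image.mp (hy i)
    simpa only [hx] using h x

variable {R σ τ : Type*} [CommSemiring R]

theorem totalDegree_bind₁_le {g : σ → MvPolynomial τ R} {d : ℕ}
    (hg : ∀ i, (g i).totalDegree ≤ d) (f : MvPolynomial σ R) :
    (bind₁ g f).totalDegree ≤ f.totalDegree * d := by
  conv_lhs => rw [f.as_sum, map_sum]
  refine (totalDegree_finsetSum _ _).trans (Finset.sup_le fun m hm => ?_)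
  rw [bind₁_monomial]
  refine (totalDegree_mul _ _).trans ?_
  rw [totalDegree_C, zero_add]
  refine (totalDegree_finsetProd _ _).trans ?_
  calc ∑ i ∈ m.support, (g i ^ m i).totalDegree ≤ ∑ i ∈ m.support, m i * d :=
        Finset.sum_le_sum fun i _ => (totalDegree_pow _ _).trans (Nat.mul_le_mul_left _ (hg i))
    _ = (m.sum fun _ e => e) * d := by rw [Finsupp.sum, Finset.sum_mul]
    _ ≤ f.totalDegree * d := Nat.mul_le_mul_right _ (le_totalDegree hm)

theorem support_subset_Iic_of_totalDegree_le [Fintype σ] [DecidableEq σ] {f : MvPolynomial σ R}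
    {d : ℕ} (h : f.totalDegree ≤ d) :
    f.support ⊆ Finset.Iic (Finsupp.equivFunOnFinite.symm fun _ => d) :=
  fun _ hm => Finset.mem_Iic.mpr fun i =>
    (monomial_le_degreeOf i hm).trans ((degreeOf_le_totalDegree f i).trans h)

noncomputable def evalRight (c : τ → R) : MvPolynomial (σ ⊕ τ) R →ₐ[R] MvPolynomial σ R :=
  aeval (Sum.elim X fun i => C (c i))

theorem eval_evalRight (x : σ → R) (c : τ → R) (f : MvPolynomial (σ ⊕ τ) R) :
    eval x (evalRight c f) = eval (Sum.elim x c) f := by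
  change eval₂Hom (RingHom.id R) x _ = _
  rw [evalRight, aeval_eq_bind₁, eval₂Hom_bind₁]
  congr 2
  funext i
  cases i <;> simp

theorem totalDegree_evalRight_le (c : τ → R) (f : MvPolynomial (σ ⊕ τ) R) :
    (evalRight c f).totalDegree ≤ f.totalDegree := by
  have h := totalDegree_bind₁_le (d := 1) (g := Sum.elim X fun i => C (c i)) ?_ f
  · rwa [mul_one, ← aeval_eq_bind₁] at h
  · rintro (i | i)
    · exact (totalDegree_monomial_le _ _).trans (by simp)
    · simp

noncomputable def ofCoeffs {M : Finset (σ →₀ ℕ)} (v : M → R) : MvPolynomial σ R :=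
  ∑ m : M, monomial (m : σ →₀ ℕ) (v m)

open Classical in
theorem coeff_ofCoeffs {M : Finset (σ →₀ ℕ)} (v : M → R) (m : σ →₀ ℕ) :
    coeff m (ofCoeffs v) = if h : m ∈ M then v ⟨m, h⟩ else 0 := by
  rw [ofCoeffs, coeff_sum]
  split_ifs with h
  · rw [Finset.sum_eq_single ⟨m, h⟩ (fun b _ hb => by
      rw [coeff_monomial, if_neg (fun e => hb (Subtype.ext e))]) (by simp), coeff_monomial,
      if_pos rfl]
  · exact Finset.sum_eq_zero fun b _ => by
      rw [coeff_monomial, if_neg fun (e : (b : σ →₀ ℕ) = m) => h (e ▸ b.2)]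

theorem eval_ofCoeffs {M : Finset (σ →₀ ℕ)} (x : σ → R) (v : M → R) :
    eval x (ofCoeffs v) = ∑ m : M, v m * (m : σ →₀ ℕ).prod fun i e => x i ^ e := by
  simp [ofCoeffs, eval_monomial]

theorem eq_C_mul_ofCoeffs {M : Finset (σ →₀ ℕ)} {f : MvPolynomial σ R} (hf : f.support ⊆ M)
    {t : R} {u : M → R} (h : (fun m : M => coeff (m : σ →₀ ℕ) f) = t • u) :
    f = C t * ofCoeffs u := by
  classical
  ext m
  rw [coeff_C_mul, coeff_ofCoeffs]
  split_ifs with hm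
  · exact congrFun h ⟨m, hm⟩
  · rw [mul_zero, ← notMem_support_iff]
    exact fun h => hm (hf h)

theorem ofCoeffs_ne_zero {𝕜 : Type*} [NormedField 𝕜] {M : Finset (σ →₀ ℕ)} {u : M → 𝕜}
    (hu : IsNormalized u) : ofCoeffs u ≠ 0 := by
  obtain ⟨-, m, hm⟩ := hu
  intro h
  simpa [coeff_ofCoeffs, hm] using congrArg (coeff (m : σ →₀ ℕ)) h

theorem norm_coeff_ofCoeffs_le_one {𝕜 : Type*} [NormedField 𝕜] {M : Finset (σ →₀ ℕ)}
    {u : M → 𝕜} (hu : IsNormalized u) (m : σ →₀ ℕ) : ‖coeff m (ofCoeffs u)‖ ≤ 1 := by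
  classical
  rw [coeff_ofCoeffs]
  split_ifs
  exacts [hu.1 _, by simp]

end MvPolynomial

section Padic

variable {p : ℕ} [Fact p.Prime]

theorem Padic.addValuation_eq_of_norm_eq {x y : ℚ_[p]} (h : ‖x‖ = ‖y‖) :
    Padic.addValuation x = Padic.addValuation y := by
  by_cases hx : x = 0
  · rw [hx, norm_zero, eq_comm, norm_eq_zero] at h
    rw [hx, h]
  have hy : y ≠ 0 := by rintro rfl; simp [hx] at h
  have hp : (1 : ℝ) < p := mod_cast (Fact.out : p.Prime).one_lt
  rw [Padic.norm_eq_zpow_neg_valuation hx, Padic.norm_eq_zpow_neg_valuation hy] at h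
  rw [Padic.addValuation.apply hx, Padic.addValuation.apply hy,
    neg_inj.mp (zpow_right_injective₀ (by positivity) hp.ne' h)]

theorem Padic.exists_pow_eq_of_norm_sub_one_lt {u : ℚ_[p]} {k : ℕ}
    (h : ‖u - 1‖ < ‖(k : ℚ_[p])‖ ^ 2) : ∃ w : ℚ_[p], w ^ k = u := by
  have hk : ‖(k : ℚ_[p])‖ ^ 2 ≤ 1 :=
    pow_le_one₀ (norm_nonneg _) (IsUltrametricDist.norm_natCast_le_one ℚ_[p] k)
  have hu : ‖u‖ ≤ 1 :=
    (Padic.norm_eq_of_norm_sub_lt_right (by simpa using h.trans_le hk)).trans norm_one |>.le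
  let v : ℤ_[p] := ⟨u, hu⟩
  obtain ⟨z, hz, -⟩ := hensels_lemma (p := p) (F := Polynomial.X ^ k - Polynomial.C v) (a := 1) (by
    simp [Polynomial.derivative_X_pow]
    rw [PadicInt.norm_def, PadicInt.norm_def, PadicInt.coe_sub, PadicInt.coe_one,
      PadicInt.coe_natCast, norm_sub_rev]
    exact h)
  refine ⟨z, ?_⟩
  simp [sub_eq_zero] at hz
  simpa [v] using congrArg ((↑) : ℤ_[p] → ℚ_[p]) hz

theorem Padic.exists_pow_eq_of_norm_sub_lt {a b : ℚ_[p]} {k : ℕ}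
    (h : ‖a - b‖ < ‖(k : ℚ_[p])‖ ^ 2 * ‖b‖) (hb : ∃ w : ℚ_[p], w ^ k = b) :
    ∃ w : ℚ_[p], w ^ k = a := by
  obtain ⟨w, rfl⟩ := hb
  have hw : w ^ k ≠ 0 := by
    rintro h0
    rw [h0, norm_zero, mul_zero] at h
    exact (norm_nonneg _).not_gt h
  obtain ⟨v, hv⟩ := Padic.exists_pow_eq_of_norm_sub_one_lt (u := a / w ^ k) (k := k) (by
    rwa [div_sub_one hw, norm_div, div_lt_iff₀ (norm_pos_iff.mpr hw)])
  exact ⟨v * w, by rw [mul_pow, hv, div_mul_cancel₀ _ hw]⟩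

/-- `k = 0` is excluded since `w ^ 0 = a` only says `a = 1`. -/
def SameNormAndPowers (K : ℕ) (a b : ℚ_[p]) : Prop :=
  ‖a‖ = ‖b‖ ∧ ∀ k, 0 < k → k ≤ K → ((∃ w : ℚ_[p], w ^ k = a) ↔ ∃ w : ℚ_[p], w ^ k = b)

theorem SameNormAndPowers.refl (K : ℕ) (a : ℚ_[p]) : SameNormAndPowers K a a :=
  ⟨rfl, fun _ _ _ => Iff.rfl⟩

theorem SameNormAndPowers.mono {K L : ℕ} {a b : ℚ_[p]} (hKL : K ≤ L)
    (h : SameNormAndPowers L a b) : SameNormAndPowers K a b :=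
  ⟨h.1, fun k hk hkK => h.2 k hk (hkK.trans hKL)⟩

theorem sameNormAndPowers_of_norm_sub_lt {K : ℕ} {a b : ℚ_[p]}
    (h : ‖a - b‖ < ‖(K ! : ℚ_[p])‖ ^ 2 * ‖b‖) : SameNormAndPowers K a b := by
  have hK : ‖(K ! : ℚ_[p])‖ ^ 2 ≤ 1 :=
    pow_le_one₀ (norm_nonneg _) (IsUltrametricDist.norm_natCast_le_one ℚ_[p] _)
  have hab : ‖a‖ = ‖b‖ := Padic.norm_eq_of_norm_sub_lt_right
    (h.trans_le (mul_le_of_le_one_left (norm_nonneg _) hK))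
  refine ⟨hab, fun k hk hkK => ?_⟩
  have h' : ‖a - b‖ < ‖(k : ℚ_[p])‖ ^ 2 * ‖b‖ := h.trans_le (mul_le_mul_of_nonneg_right
    (pow_le_pow_left₀ (norm_nonneg _) (norm_factorial_le_norm_natCast hk hkK) 2) (norm_nonneg _))
  exact ⟨Padic.exists_pow_eq_of_norm_sub_lt (by rwa [norm_sub_rev, hab]),
    Padic.exists_pow_eq_of_norm_sub_lt h'⟩

theorem exists_pos_le_prod_norm_eval_ofCoeffs (σ ι : Type*) [Fintype σ] [Fintype ι]
    (M : Finset (σ →₀ ℕ)) :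
    ∃ ε > 0, ∀ c : ι → M → ℚ_[p], (∀ j, IsNormalized (c j)) →
      ∃ a : σ → ℤ_[p], ε ≤ ∏ j, ‖eval (fun i => (a i : ℚ_[p])) (ofCoeffs (c j))‖ := by
  have hpos : ∀ c ∈ Set.univ.pi fun _ : ι => {u : M → ℚ_[p] | IsNormalized u},
      ∃ a : σ → ℤ_[p], 0 < ∏ j, ‖eval (fun i => (a i : ℚ_[p])) (ofCoeffs (c j))‖ := by
    intro c hc
    obtain ⟨x, hx⟩ := exists_eval_natCast_ne_zero
      (Finset.prod_ne_zero_iff.mpr fun j _ => ofCoeffs_ne_zero (hc j trivial))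
    refine ⟨fun i => x i, ?_⟩
    simpa [← norm_prod, ← map_prod] using hx
  obtain ⟨ε, hε, h⟩ := (isCompact_univ_pi fun _ : ι =>
    isCompact_setOf_isNormalized (𝕜 := ℚ_[p]) (ι := M)).exists_pos_forall_exists_le
    (fun a => by simp only [eval_ofCoeffs]; fun_prop) hpos
  exact ⟨ε, hε, fun c hc => h c fun j _ => hc j⟩

theorem exists_pos_forall_exists_integral_point_norm_eval_ge (σ ι : Type*) [Fintype σ]
    [Fintype ι] (d : ℕ) :
    ∃ ε > 0, ∀ f : ι → MvPolynomial σ ℚ_[p], (∀ j, (f j).totalDegree ≤ d) →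
      ∃ a : σ → ℤ_[p], ∀ j m, ε * ‖coeff m (f j)‖ ≤ ‖eval (fun i => (a i : ℚ_[p])) (f j)‖ := by
  classical
  set M : Finset (σ →₀ ℕ) := Finset.Iic (Finsupp.equivFunOnFinite.symm fun _ => d)
  have : Nonempty M := ⟨⟨0, Finset.mem_Iic.mpr (by simp)⟩⟩
  obtain ⟨ε, hε, hprod⟩ := exists_pos_le_prod_norm_eval_ofCoeffs (p := p) σ ι M
  refine ⟨ε, hε, fun f hf => ?_⟩
  choose t u hu hftu using fun j =>
    exists_eq_smul_isNormalized fun m : M => coeff (m : σ →₀ ℕ) (f j)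
  obtain ⟨a, ha⟩ := hprod u hu
  refine ⟨a, fun j m => ?_⟩
  have hfj := eq_C_mul_ofCoeffs (support_subset_Iic_of_totalDegree_le (hf j)) (hftu j)
  have hlow : ε ≤ ‖eval (fun i => (a i : ℚ_[p])) (ofCoeffs (u j))‖ := by
    refine ha.trans ?_
    rw [← Finset.mul_prod_erase _ _ (Finset.mem_univ j)]
    exact mul_le_of_le_one_right (norm_nonneg _) (Finset.prod_le_one (fun _ _ => norm_nonneg _)
      fun k _ => norm_eval_le_of_norm_coeff_le (norm_coeff_ofCoeffs_le_one (hu k)) fun i => (a i).2)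
  calc ε * ‖coeff m (f j)‖ = ε * (‖t j‖ * ‖coeff m (ofCoeffs (u j))‖) := by
        rw [hfj, coeff_C_mul, norm_mul]
    _ ≤ ε * ‖t j‖ := mul_le_mul_of_nonneg_left
        (mul_le_of_le_one_right (norm_nonneg _) (norm_coeff_ofCoeffs_le_one (hu j) m)) hε.le
    _ ≤ ‖eval (fun i => (a i : ℚ_[p])) (ofCoeffs (u j))‖ * ‖t j‖ :=
        mul_le_mul_of_nonneg_right hlow (norm_nonneg _)
    _ = ‖eval (fun i => (a i : ℚ_[p])) (f j)‖ := by rw [hfj, map_mul, eval_C, norm_mul, mul_comm]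

theorem exists_pos_forall_exists_sameNormAndPowers {σ τ : Type*} [Fintype σ]
    (F : Finset (MvPolynomial (σ ⊕ τ) ℚ_[p])) (K : ℕ) :
    ∃ r > 0, ∀ c : τ → ℚ_[p], ∃ a : σ → ℤ_[p], ∀ x : σ → ℤ_[p], (∀ i, dist (x i) (a i) ≤ r) →
      ∀ f ∈ F, SameNormAndPowers K (eval (Sum.elim (fun i => (x i : ℚ_[p])) c) f)
        (eval (Sum.elim (fun i => (a i : ℚ_[p])) c) f) := by
  obtain ⟨ε, hε, hlow⟩ :=
    exists_pos_forall_exists_integral_point_norm_eval_ge (p := p) σ F (F.sup totalDegree)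
  set θ := ‖(K ! : ℚ_[p])‖ ^ 2
  have hθ : 0 < θ := pow_pos (norm_pos_iff.mpr (Nat.cast_ne_zero.mpr K.factorial_ne_zero)) 2
  refine ⟨θ * ε / 2, by positivity, fun c => ?_⟩
  obtain ⟨a, ha⟩ := hlow (fun f => evalRight c (f : MvPolynomial (σ ⊕ τ) ℚ_[p]))
    fun f => (totalDegree_evalRight_le c _).trans (Finset.le_sup f.2)
  refine ⟨a, fun x hx f hf => ?_⟩
  have hg := ha ⟨f, hf⟩
  simp only [← eval_evalRight] at hg ⊢
  set g := evalRight c f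
  set Y := eval (fun i => (a i : ℚ_[p])) g
  by_cases hY : Y = 0
  · have hg0 : g = 0 := by
      ext m
      have hm := hg m
      rw [hY, norm_zero, ← mul_zero ε] at hm
      exact norm_le_zero_iff.mp (le_of_mul_le_mul_left hm hε)
    rw [hY, hg0, map_zero]
    exact .refl _ _
  apply sameNormAndPowers_of_norm_sub_lt
  calc ‖eval (fun i => (x i : ℚ_[p])) g - Y‖ ≤ ‖Y‖ / ε * (θ * ε / 2) :=
        norm_eval_sub_eval_le (fun m => (le_div_iff₀' hε).mpr (hg m)) (by positivity)
          (fun i => (x i).2) (fun i => (a i).2) fun i => by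
            rw [← PadicInt.coe_sub, ← PadicInt.norm_def, ← dist_eq_norm]; exact hx i
    _ = θ * ‖Y‖ / 2 := by field_simp
    _ < θ * ‖Y‖ := half_lt_self (mul_pos hθ (norm_pos_iff.mpr hY))

theorem BoolComb.exists_finset_sameNormAndPowers {α ι : Type*} (e : α → ι → ℚ_[p]) {R : Set α}
    (hR : BoolComb {S | ∃ f g : MvPolynomial ι ℚ_[p],
        S = {z | eval (e z) f = 0} ∨
        S = {z | Padic.addValuation (eval (e z) f) ≤ Padic.addValuation (eval (e z) g)} ∨
        ∃ k : ℕ, 2 ≤ k ∧ S = {z | ∃ w : ℚ_[p], w ^ k = eval (e z) f}} R) :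
    ∃ (F : Finset (MvPolynomial ι ℚ_[p])) (K : ℕ), ∀ z z',
      (∀ f ∈ F, SameNormAndPowers K (eval (e z) f) (eval (e z') f)) → (z ∈ R ↔ z' ∈ R) := by
  classical
  suffices ∃ FK : Finset (MvPolynomial ι ℚ_[p]) × ℕ, ∀ z z',
      (∀ f ∈ FK.1, SameNormAndPowers FK.2 (eval (e z) f) (eval (e z') f)) → (z ∈ R ↔ z' ∈ R) from
    let ⟨⟨F, K⟩, h⟩ := this; ⟨F, K, h⟩
  refine hR.exists_mem_iff_of_rel _
    (fun _ _ hle _ _ h f hf => (h f ((Prod.le_def.mp hle).1 hf)).mono (Prod.le_def.mp hle).2) ?_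
  rintro S ⟨f, g, rfl | rfl | ⟨k, hk, rfl⟩⟩
  · refine ⟨({f}, 0), fun z z' h => ?_⟩
    change eval (e z) f = 0 ↔ eval (e z') f = 0
    rw [← norm_eq_zero, (h f (Finset.mem_singleton_self f)).1, norm_eq_zero]
  · refine ⟨({f, g}, 0), fun z z' h => ?_⟩
    simp only [Set.mem_ofPred_eq]
    rw [Padic.addValuation_eq_of_norm_eq (h f (by simp)).1,
      Padic.addValuation_eq_of_norm_eq (h g (by simp)).1]
  · exact ⟨({f}, k), fun z z' h => (h f (Finset.mem_singleton_self f)).2 k (by omega) le_rfl⟩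

end Padic

theorem stmt_15_general (p : ℕ) [Fact p.Prime] (n m s : ℕ)
    [MeasurableSpace (Fin n → ℤ_[p])] [BorelSpace (Fin n → ℤ_[p])]
    [MeasurableSpace (Fin m → ℤ_[p])] [BorelSpace (Fin m → ℤ_[p])]
    (μn : Measure (Fin n → ℤ_[p])) [μn.IsAddHaarMeasure]
    (μm : Measure (Fin m → ℤ_[p])) [μm.IsAddHaarMeasure]
    (R : Set ((Fin n → ℚ_[p]) × (Fin m → ℚ_[p]) × (Fin s → ℚ_[p])))
    (hR : BoolComb
      {S | ∃ f g : MvPolynomial (Fin n ⊕ Fin m ⊕ Fin s) ℚ_[p],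
        S = {z | MvPolynomial.eval (Sum.elim z.1 (Sum.elim z.2.1 z.2.2)) f = 0} ∨
        S = {z | Padic.addValuation (MvPolynomial.eval (Sum.elim z.1 (Sum.elim z.2.1 z.2.2)) f)
                  ≤ Padic.addValuation
                      (MvPolynomial.eval (Sum.elim z.1 (Sum.elim z.2.1 z.2.2)) g)} ∨
        ∃ k : ℕ, 2 ≤ k ∧
          S = {z | ∃ w : ℚ_[p],
            w ^ k = MvPolynomial.eval (Sum.elim z.1 (Sum.elim z.2.1 z.2.2)) f}} R) :
    ∃ δ : ℝ, 0 < δ ∧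
      ∀ c : Fin s → ℚ_[p],
        ∃ (A : Set (Fin n → ℤ_[p])) (B : Set (Fin m → ℤ_[p])),
          MeasurableSet A ∧ MeasurableSet B ∧
          ENNReal.ofReal δ ≤ μn A ∧ ENNReal.ofReal δ ≤ μm B ∧
          ((∀ a ∈ A, ∀ b ∈ B,
              ((fun i => (a i : ℚ_[p])), (fun i => (b i : ℚ_[p])), c) ∈ R) ∨
           (∀ a ∈ A, ∀ b ∈ B,
              ((fun i => (a i : ℚ_[p])), (fun i => (b i : ℚ_[p])), c) ∉ R)) := by
  classical
  obtain ⟨F, K, hFK⟩ := BoolComb.exists_finset_sameNormAndPowers _ hR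
  obtain ⟨r, hr, hball⟩ := exists_pos_forall_exists_sameNormAndPowers (σ := Fin n ⊕ Fin m)
    (F.image (rename (Equiv.sumAssoc _ _ _).symm)) K
  obtain ⟨δn, hδn, hμn⟩ := exists_pos_ofReal_le_measure_closedBall μn hr
  obtain ⟨δm, hδm, hμm⟩ := exists_pos_ofReal_le_measure_closedBall μm hr
  refine ⟨min δn δm, lt_min hδn hδm, fun c => ?_⟩
  obtain ⟨a, ha⟩ := hball c
  have hconst : ∀ x ∈ closedBall (a ∘ Sum.inl) r, ∀ y ∈ closedBall (a ∘ Sum.inr) r,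
      (((fun i => (x i : ℚ_[p])), (fun i => (y i : ℚ_[p])), c) ∈ R ↔
        ((fun i => (a (Sum.inl i) : ℚ_[p])), (fun i => (a (Sum.inr i) : ℚ_[p])), c) ∈ R) := by
    intro x hx y hy
    refine hFK _ _ fun f hf => ?_
    have h := ha (Sum.elim x y) (Sum.forall.mpr ⟨fun i => (dist_le_pi_dist x _ i).trans hx,
      fun i => (dist_le_pi_dist y _ i).trans hy⟩) _ (Finset.mem_image_of_mem _ hf)
    simp only [eval_rename] at h
    convert h using 3 <;> ext (i | i | i) <;> rfl
  refine ⟨closedBall (a ∘ Sum.inl) r, closedBall (a ∘ Sum.inr) r, measurableSet_closedBall,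
    measurableSet_closedBall, (ENNReal.ofReal_le_ofReal (min_le_left _ _)).trans (hμn _),
    (ENNReal.ofReal_le_ofReal (min_le_right _ _)).trans (hμm _), ?_⟩
  by_cases h : ((fun i => (a (Sum.inl i) : ℚ_[p])), (fun i => (a (Sum.inr i) : ℚ_[p])), c) ∈ R
  · exact .inl fun x hx y hy => (hconst x hx y hy).mpr h
  · exact .inr fun x hx y hy hxy => h ((hconst x hx y hy).mp hxy)

/-- Homogeneous pairs of definite Haar measure in `ℤ_p^n × ℤ_p^m` for parametrized relations on
`ℚ_p^n × ℚ_p^m × ℚ_p^s` that are Boolean combinations of polynomial equalities, valuation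
comparisons, and `k`-th power conditions.  Here `μn` and `μm` are the normalized (probability)
Haar measures on the compact groups `ℤ_p^n` and `ℤ_p^m`. -/
theorem stmt_15 (p : ℕ) [Fact p.Prime] (n m s : ℕ)
    [MeasurableSpace (Fin n → ℤ_[p])] [BorelSpace (Fin n → ℤ_[p])]
    [MeasurableSpace (Fin m → ℤ_[p])] [BorelSpace (Fin m → ℤ_[p])]
    (μn : Measure (Fin n → ℤ_[p])) [μn.IsAddHaarMeasure] [IsProbabilityMeasure μn]
    (μm : Measure (Fin m → ℤ_[p])) [μm.IsAddHaarMeasure] [IsProbabilityMeasure μm]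
    (R : Set ((Fin n → ℚ_[p]) × (Fin m → ℚ_[p]) × (Fin s → ℚ_[p])))
    (hR : BoolComb
      {S | ∃ f g : MvPolynomial (Fin n ⊕ Fin m ⊕ Fin s) ℚ_[p],
        S = {z | MvPolynomial.eval (Sum.elim z.1 (Sum.elim z.2.1 z.2.2)) f = 0} ∨
        S = {z | Padic.addValuation (MvPolynomial.eval (Sum.elim z.1 (Sum.elim z.2.1 z.2.2)) f)
                  ≤ Padic.addValuation
                      (MvPolynomial.eval (Sum.elim z.1 (Sum.elim z.2.1 z.2.2)) g)} ∨
        ∃ k : ℕ, 2 ≤ k ∧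
          S = {z | ∃ w : ℚ_[p],
            w ^ k = MvPolynomial.eval (Sum.elim z.1 (Sum.elim z.2.1 z.2.2)) f}} R) :
    ∃ δ : ℝ, 0 < δ ∧
      ∀ c : Fin s → ℚ_[p],
        ∃ (A : Set (Fin n → ℤ_[p])) (B : Set (Fin m → ℤ_[p])),
          MeasurableSet A ∧ MeasurableSet B ∧
          ENNReal.ofReal δ ≤ μn A ∧ ENNReal.ofReal δ ≤ μm B ∧
          ((∀ a ∈ A, ∀ b ∈ B,
              ((fun i => (a i : ℚ_[p])), (fun i => (b i : ℚ_[p])), c) ∈ R) ∨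
           (∀ a ∈ A, ∀ b ∈ B,
              ((fun i => (a i : ℚ_[p])), (fun i => (b i : ℚ_[p])), c) ∉ R)) :=
  stmt_15_general p n m s μn μm R hR
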